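/- Let V(x) = d_g(x,O)²/(2(n+α)) on ℝⁿ \ {0} with g = |x|^{−2γ}δ, γ < 1, n + α ≠ 0. Then the Riemannian Hessian of V with respect to g satisfies ∇²V = (1/(n+α)) g, and the weighted Laplacian satisfies Δ_f V = 1 where f = −α log d_g(x,O). -/

import Mathlib

/-!
All three functions are radial near `x ≠ 0`: with `t = ‖y‖²` and `s = 1 - γ`, `V = c t^s`,
`φ = -(γ/2) log t` and `f = -(α s/2) log t + const`. For `u = g(‖y‖²)` one has `∇u = 2 g'(t) y` and
`D²u = 4 g''(t) y ⊗ y + 2 g'(t) δ`. In the conformal Hessian the `x ⊗ x` terms cancel because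
`s - 1 = -γ` ties the exponent of `V` to the coefficient of `φ`, and the `δ` terms add up to
`2 c s² t^{-γ} δ = t^{-γ} δ / (n + α)`. The same bookkeeping reduces the weighted Laplacian
to `t^γ · 2 c s² (n + α) t^{-γ} = 1`.
-/

open RealInnerProductSpace

/-- The Euclidean Laplacian: sum of second partial derivatives. -/
noncomputable def euclLap {n : ℕ} (u : EuclideanSpace ℝ (Fin n) → ℝ)
    (x : EuclideanSpace ℝ (Fin n)) : ℝ :=
  ∑ i : Fin n,
    fderiv ℝ (fun y => fderiv ℝ u y (EuclideanSpace.single i 1)) x (EuclideanSpace.single i 1)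

open Filter Topology

section RadialFunctions

variable {F : Type*} [NormedAddCommGroup F] [InnerProductSpace ℝ F] {g : ℝ → ℝ} {x : F}

theorem HasDerivAt.hasFDerivAt_comp_norm_sq {g' : ℝ} (hg : HasDerivAt g g' (‖x‖ ^ 2)) :
    HasFDerivAt (fun y => g (‖y‖ ^ 2)) ((2 * g') • innerSL ℝ x) x := by
  refine (hg.comp_hasFDerivAt x (hasStrictFDerivAt_norm_sq x).hasFDerivAt).congr_fderiv ?_
  ext v
  simp
  ring

theorem HasDerivAt.hasGradientAt_comp_norm_sq [CompleteSpace F] {g' : ℝ}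
    (hg : HasDerivAt g g' (‖x‖ ^ 2)) :
    HasGradientAt (fun y => g (‖y‖ ^ 2)) ((2 * g') • x) x := by
  rw [hasGradientAt_iff_hasFDerivAt]
  refine hg.hasFDerivAt_comp_norm_sq.congr_fderiv ?_
  ext v
  simp

theorem fderiv_fderiv_comp_norm_sq_apply {g' : ℝ → ℝ} {g'' : ℝ}
    (hg : ∀ᶠ t in 𝓝 (‖x‖ ^ 2), HasDerivAt g (g' t) t) (hg' : HasDerivAt g' g'' (‖x‖ ^ 2))
    (v w : F) :
    fderiv ℝ (fun y => fderiv ℝ (fun z => g (‖z‖ ^ 2)) y v) x w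
      = 4 * g'' * ⟪x, v⟫ * ⟪x, w⟫ + 2 * g' (‖x‖ ^ 2) * ⟪v, w⟫ := by
  have hfirst : (fun y => fderiv ℝ (fun z => g (‖z‖ ^ 2)) y v)
      =ᶠ[𝓝 x] fun y => 2 * g' (‖y‖ ^ 2) * ⟪v, y⟫ := by
    filter_upwards [((continuous_norm.pow 2).tendsto x).eventually hg] with y hy
    simp [hy.hasFDerivAt_comp_norm_sq.fderiv, real_inner_comm]
  have hsecond : HasFDerivAt (fun y => 2 * g' (‖y‖ ^ 2) * ⟪v, y⟫) _ x :=
    ((hg'.hasFDerivAt_comp_norm_sq (x := x)).const_mul 2).mul (innerSL ℝ v).hasFDerivAt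
  rw [hfirst.fderiv_eq, hsecond.fderiv]
  simp [real_inner_comm]
  ring

theorem hasGradientAt_mul_rpow_norm_sq [CompleteSpace F] (c s : ℝ) (hx : x ≠ 0) :
    HasGradientAt (fun y => c * (‖y‖ ^ 2) ^ s) ((2 * c * s * (‖x‖ ^ 2) ^ (s - 1)) • x) x := by
  have ht : ‖x‖ ^ 2 ≠ 0 := by positivity
  convert ((Real.hasDerivAt_rpow_const (Or.inl ht)).const_mul c).hasGradientAt_comp_norm_sq
    using 2
  ring

theorem fderiv_fderiv_mul_rpow_norm_sq_apply (c s : ℝ) (hx : x ≠ 0) (v w : F) :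
    fderiv ℝ (fun y => fderiv ℝ (fun z => c * (‖z‖ ^ 2) ^ s) y v) x w
      = 4 * c * s * (s - 1) * (‖x‖ ^ 2) ^ (s - 2) * ⟪x, v⟫ * ⟪x, w⟫
        + 2 * c * s * (‖x‖ ^ 2) ^ (s - 1) * ⟪v, w⟫ := by
  have ht : ‖x‖ ^ 2 ≠ 0 := by positivity
  have hderiv : ∀ᶠ t in 𝓝 (‖x‖ ^ 2), HasDerivAt (fun t => c * t ^ s) (c * (s * t ^ (s - 1))) t :=
    (eventually_ne_nhds ht).mono fun t ht => (Real.hasDerivAt_rpow_const (Or.inl ht)).const_mul c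
  rw [fderiv_fderiv_comp_norm_sq_apply hderiv
    (((Real.hasDerivAt_rpow_const (Or.inl ht)).const_mul s).const_mul c), sub_sub,
    one_add_one_eq_two]
  ring

end RadialFunctions

section EuclideanCoordinates

variable {n : ℕ} {x : EuclideanSpace ℝ (Fin n)}

theorem fderiv_fderiv_mul_rpow_norm_sq_single (c s : ℝ) (hx : x ≠ 0) (i j : Fin n) :
    fderiv ℝ (fun y => fderiv ℝ (fun z : EuclideanSpace ℝ (Fin n) => c * (‖z‖ ^ 2) ^ s) y
        (EuclideanSpace.single j 1)) x (EuclideanSpace.single i 1)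
      = 4 * c * s * (s - 1) * (‖x‖ ^ 2) ^ (s - 2) * (x i * x j)
        + 2 * c * s * (‖x‖ ^ 2) ^ (s - 1) * (if i = j then 1 else 0) := by
  rw [fderiv_fderiv_mul_rpow_norm_sq_apply c s hx]
  simp [EuclideanSpace.inner_single_right, eq_comm (a := i)]
  ring

theorem euclLap_eq_of_fderiv_fderiv_single {u : EuclideanSpace ℝ (Fin n) → ℝ} {A B : ℝ}
    (h : ∀ i j, fderiv ℝ (fun y => fderiv ℝ u y (EuclideanSpace.single j 1)) x
      (EuclideanSpace.single i 1) = A * (x i * x j) + B * (if i = j then 1 else 0)) :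
    euclLap u x = A * ‖x‖ ^ 2 + n * B := by
  simp [euclLap, h, Finset.sum_add_distrib, ← Finset.mul_sum, ← sq, EuclideanSpace.real_norm_sq_eq]

end EuclideanCoordinates

section ConformalPotential

variable {F : Type*} [NormedAddCommGroup F]

theorem sq_rpow_norm_div_eq (s m : ℝ) :
    (fun y : F => (‖y‖ ^ s / s) ^ 2 / m) = fun y => 1 / (s ^ 2 * m) * (‖y‖ ^ 2) ^ s := by
  funext y
  rw [div_pow, Real.rpow_pow_comm (norm_nonneg y)]
  ring

theorem log_norm_eq_log_norm_sq (k : ℝ) :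
    (fun y : F => k * Real.log ‖y‖) = fun y => k / 2 * Real.log (‖y‖ ^ 2) := by
  funext y
  rw [Real.log_pow]
  push_cast
  ring

-- Only eventually: at `y = 0` the left side is the junk value `k * log 0 = 0`.
theorem log_rpow_norm_div_eventuallyEq {s : ℝ} (hs : s ≠ 0) (k : ℝ) {x : F} (hx : x ≠ 0) :
    (fun y : F => k * Real.log (‖y‖ ^ s / s))
      =ᶠ[𝓝 x] fun y => k * s / 2 * Real.log (‖y‖ ^ 2) - k * Real.log s := by
  filter_upwards [isOpen_compl_singleton.mem_nhds hx] with y hy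
  have hy : 0 < ‖y‖ := norm_pos_iff.mpr hy
  rw [Real.log_div (Real.rpow_pos_of_pos hy s).ne' hs, Real.log_rpow hy, Real.log_pow]
  push_cast
  ring

theorem norm_rpow_two_mul (x : F) (s : ℝ) : ‖x‖ ^ (2 * s) = (‖x‖ ^ 2) ^ s := by
  exact_mod_cast Real.rpow_natCast_mul (norm_nonneg x) 2 s

end ConformalPotential

/-- For `V(x) = d_g(x,O)²/(2(n+α))` on `ℝⁿ \ {0}` with `g = |x|^{−2γ}δ = e^{2φ}δ`
(`φ = −γ log|x|`, `γ < 1`, `n + α ≠ 0`, `d_g(x,O) = |x|^{1−γ}/(1−γ)`), the Riemannian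
Hessian `∇²V = D²V − (dV⊗dφ + dφ⊗dV) + (DV·Dφ)δ` equals `(1/(n+α)) g`, and the weighted
Laplacian `Δ_f V = e^{−2φ}(ΔV + (n−2)DV·Dφ − Df·DV)` equals `1`, where
`f = −α log d_g(x,O)`. -/
theorem stmt11 (n : ℕ) (γ α : ℝ) (hγ : γ < 1) (hα : (n : ℝ) + α ≠ 0)
    (V f φ : EuclideanSpace ℝ (Fin n) → ℝ)
    (hV : V = fun y => (‖y‖ ^ (1 - γ) / (1 - γ)) ^ 2 / (2 * ((n : ℝ) + α)))
    (hf : f = fun y => -α * Real.log (‖y‖ ^ (1 - γ) / (1 - γ)))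
    (hφ : φ = fun y => -γ * Real.log ‖y‖) :
    ∀ x : EuclideanSpace ℝ (Fin n), x ≠ 0 →
      (∀ i j : Fin n,
        fderiv ℝ (fun y => fderiv ℝ V y (EuclideanSpace.single j 1)) x
            (EuclideanSpace.single i 1)
          - (gradient V x i * gradient φ x j + gradient φ x i * gradient V x j)
          + ⟪gradient V x, gradient φ x⟫ * (if i = j then (1:ℝ) else 0)
        = (1 / ((n : ℝ) + α)) * (‖x‖ ^ (-(2 * γ)) * (if i = j then (1:ℝ) else 0))) ∧
      ‖x‖ ^ (2 * γ) * (euclLap V x + ((n : ℝ) - 2) * ⟪gradient V x, gradient φ x⟫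
          - ⟪gradient f x, gradient V x⟫) = 1 := by
  intro x hx
  subst hV hf hφ
  have hs : 1 - γ ≠ 0 := by linarith
  have ht : ‖x‖ ^ 2 ≠ 0 := by positivity
  rw [sq_rpow_norm_div_eq, log_norm_eq_log_norm_sq,
    (log_rpow_norm_div_eventuallyEq hs (-α) hx).gradient_eq,
    (hasGradientAt_mul_rpow_norm_sq _ _ hx).gradient,
    ((Real.hasDerivAt_log ht).const_mul _).hasGradientAt_comp_norm_sq.gradient,
    (((Real.hasDerivAt_log ht).const_mul _).sub_const _).hasGradientAt_comp_norm_sq.gradient,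
    euclLap_eq_of_fderiv_fderiv_single (fderiv_fderiv_mul_rpow_norm_sq_single _ _ hx)]
  simp only [fderiv_fderiv_mul_rpow_norm_sq_single _ _ hx, real_inner_smul_left,
    real_inner_smul_right, real_inner_self_eq_norm_sq, PiLp.smul_apply, smul_eq_mul,
    show 1 - γ - 1 = -γ by ring, show 1 - γ - 2 = -γ - 1 by ring, Real.rpow_sub_one ht,
    Real.rpow_neg (sq_nonneg ‖x‖), neg_mul_eq_mul_neg, norm_rpow_two_mul]
  have hpow : 0 < (‖x‖ ^ 2) ^ γ := by positivity
  refine ⟨fun i j => ?_, ?_⟩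
  · split_ifs <;> field_simp <;> ring
  · field_simp
    ring
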